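/- Given the loop functional H for the doubling loop, H(X)(b,x) = 1 + [b ≠ 1]·(1 + [x > 0]·2x) + [b = 1]·(1 + ½·(1 + X(0,2x)) + ½·(1 + X(1,2x))), the sequence I_n(b,x) = 1 + [b ≠ 1]·(1 + [x>0]·2x) + [b = 1]·(7 − 5/2^n + n·[x>0]·2x) satisfies H(0) = I_0 and H(I_n) = I_{n+1}; consequently lfp H(1,x) = ∞ whenever x > 0. -/

import Mathlib

/-! Induction gives `I_n = H^[n+1] 0`. On the looping state `b = 1` the constant part
`a_n = 7 - 5/2^n` solves `a_{n+1} = 1 + (5 + a_n)/2`, while exiting after the `k`-th doubling has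
probability `2^-k` and pays `2·2^k x`, so every unrolling adds `2x`: `I_n (1, x) ≥ n·2x`, which is
unbounded for `x > 0`. -/

/-- Characteristic functional of the doubling loop
`while (b = 1) { b :≈ ½⟨0⟩ + ½⟨1⟩; x := 2x }` with respect to the continuation
`1 + [x > 0]·2x`.  States are pairs `(b, x)`. -/
noncomputable def dblH (X : ℤ × ℤ → ENNReal) : ℤ × ℤ → ENNReal :=
  fun p => 1 + if p.1 ≠ 1 then
      1 + (if 0 < p.2 then 2 * (p.2.toNat : ENNReal) else 0)
    else
      1 + (1 / 2) * (1 + X (0, 2 * p.2)) + (1 / 2) * (1 + X (1, 2 * p.2))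

/-- `I_n(b,x) = 1 + [b ≠ 1]·(1 + [x>0]·2x) + [b = 1]·(7 − 5/2^n + n·[x>0]·2x)`. -/
noncomputable def dblI (n : ℕ) : ℤ × ℤ → ENNReal :=
  fun p => 1 + if p.1 ≠ 1 then
      1 + (if 0 < p.2 then 2 * (p.2.toNat : ENNReal) else 0)
    else
      7 - 5 / 2 ^ n + (n : ENNReal) * (if 0 < p.2 then 2 * (p.2.toNat : ENNReal) else 0)

open scoped ENNReal

theorem ite_pos_mul_toNat {R : Type*} [NonAssocSemiring R] (c : R) (x : ℤ) :
    (if 0 < x then c * (x.toNat : R) else 0) = c * x.toNat := by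
  split_ifs with hx
  · rfl
  · simp [Int.toNat_of_nonpos (not_lt.mp hx)]

theorem Int.toNat_two_mul (x : ℤ) : (2 * x).toNat = 2 * x.toNat := by
  omega

theorem seven_sub_five_div_two_pow_succ (n : ℕ) :
    (7 - 5 / 2 ^ (n + 1) : ℝ≥0∞) = 1 + 2⁻¹ * (5 + (7 - 5 / 2 ^ n)) := by
  have h5 : (5 / 2 ^ n : ℝ≥0∞) ≤ 7 :=
    calc (5 / 2 ^ n : ℝ≥0∞) ≤ 5 / 1 :=
          ENNReal.div_le_div_left (by exact_mod_cast Nat.one_le_two_pow) _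
      _ ≤ 7 := by norm_num
  have hhalf : (5 / 2 ^ (n + 1) : ℝ≥0∞) = 2⁻¹ * (5 / 2 ^ n) := by
    rw [pow_succ, ENNReal.div_eq_inv_mul, ENNReal.div_eq_inv_mul,
      ENNReal.mul_inv (by simp) (by simp)]
    ring
  refine ENNReal.sub_eq_of_eq_add (ENNReal.div_lt_top (by simp) (by simp)).ne ?_
  calc (7 : ℝ≥0∞) = 1 + 2⁻¹ * 12 := by
        rw [show (12 : ℝ≥0∞) = 2 * 6 by norm_num, ← mul_assoc,
          ENNReal.inv_mul_cancel two_ne_zero ENNReal.ofNat_ne_top]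
        norm_num
    _ = 1 + 2⁻¹ * (5 + ((7 - 5 / 2 ^ n) + 5 / 2 ^ n)) := by
        rw [tsub_add_cancel_of_le h5]; norm_num
    _ = 1 + 2⁻¹ * (5 + (7 - 5 / 2 ^ n)) + 5 / 2 ^ (n + 1) := by
        rw [hhalf]; ring

theorem dblH_zero : dblH 0 = dblI 0 := by
  funext ⟨b, x⟩
  by_cases hb : b = 1
  · simp only [dblH, dblI, hb, ne_eq, not_true_eq_false, if_false, Pi.zero_apply, add_zero,
      mul_one, pow_zero, div_one, Nat.cast_zero, zero_mul, one_div]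
    rw [add_assoc 1 2⁻¹, ENNReal.inv_two_add_inv_two,
      ENNReal.sub_eq_of_eq_add (by simp) (by norm_num : (7 : ℝ≥0∞) = 2 + 5)]
    norm_num
  · simp [dblH, dblI, hb]

theorem dblH_dblI (n : ℕ) : dblH (dblI n) = dblI (n + 1) := by
  funext ⟨b, x⟩
  by_cases hb : b = 1
  · simp only [dblH, dblI, hb, ite_pos_mul_toNat, ne_eq, zero_ne_one, not_true_eq_false,
      not_false_eq_true, if_true, if_false, one_div]
    rw [Int.toNat_two_mul, seven_sub_five_div_two_pow_succ]
    push_cast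
    calc _ = 1 + (1 + 2⁻¹ * (5 + (7 - 5 / 2 ^ n)) +
          (2⁻¹ * 2) * ((n + 1) * (2 * (x.toNat : ℝ≥0∞)))) := by ring
      _ = _ := by rw [ENNReal.inv_mul_cancel two_ne_zero ENNReal.ofNat_ne_top, one_mul]
  · simp [dblH, dblI, hb]

theorem iterate_dblH_succ_zero (n : ℕ) : dblH^[n + 1] 0 = dblI n := by
  induction n with
  | zero => exact dblH_zero
  | succ n ih => rw [Function.iterate_succ_apply', ih, dblH_dblI]

theorem natCast_le_dblI_one {x : ℤ} (hx : 0 < x) (n : ℕ) : (n : ℝ≥0∞) ≤ dblI n (1, x) := by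
  have ht : (1 : ℝ≥0∞) ≤ 2 * x.toNat := by
    norm_cast
    omega
  calc (n : ℝ≥0∞) = n * 1 := (mul_one _).symm
    _ ≤ n * (2 * x.toNat) := by gcongr
    _ ≤ dblI n (1, x) := by
      simp only [dblI, ne_eq, not_true_eq_false, if_false, hx, if_true]
      exact le_add_self.trans le_add_self

/-- the sequence `I_n` satisfies `H(0) = I_0` and
`H(I_n) = I_{n+1}`; consequently `lfp H (1, x) = ∞` whenever `x > 0`. -/
theorem doubling_loop_infinite_runtime :
    dblH 0 = dblI 0 ∧ (∀ n, dblH (dblI n) = dblI (n + 1)) ∧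
    ∀ x : ℤ, 0 < x → (⨆ n, dblH^[n] 0) (1, x) = ⊤ := by
  refine ⟨dblH_zero, dblH_dblI, fun x hx => ?_⟩
  rw [iSup_apply, eq_top_iff, ← ENNReal.iSup_natCast]
  refine iSup_le fun n => (natCast_le_dblI_one hx n).trans ?_
  rw [← iterate_dblH_succ_zero]
  exact le_iSup (fun m => dblH^[m] 0 (1, x)) (n + 1)
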